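/- Every non-center opening move loses: for every cell x of the 3×3 board with x ≠ (1,1), the position consisting of the single mark x is an N-position, so the player to move after a non-center first move (the second player of the game) has a winning strategy. -/

import Mathlib

/-
The second player wins by answering every move with its reflection through the center.
Positions that are symmetric under this point reflection, nonempty and free of the center
are P-positions. The center can never be marked safely: with any marked `x` it completes
the line through `x`, the center and `mirror x`. If a move `y` is safe, so is the reply
`mirror y`: a line it completed would contain `mirror y`, and so would the reflected line,
so the line would contain both `y` and `mirror y`; but every line containing a cell
together with its reflection passes through the center.
-/

abbrev Cell : Type := Fin 3 × Fin 3

def notaktoLines : List (Finset Cell) :=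
  [ {(0,0), (0,1), (0,2)}, {(1,0), (1,1), (1,2)}, {(2,0), (2,1), (2,2)},
    {(0,0), (1,0), (2,0)}, {(0,1), (1,1), (2,1)}, {(0,2), (1,2), (2,2)},
    {(0,0), (1,1), (2,2)}, {(0,2), (1,1), (2,0)} ]

def Dead (p : Finset Cell) : Prop := ∃ l ∈ notaktoLines, l ⊆ p

def FirstWins (p : Finset Cell) : Prop :=
  ∃ x, ∃ _hx : x ∉ p, ¬ Dead (insert x p) ∧ ¬ FirstWins (insert x p)
termination_by 9 - p.card
decreasing_by
  have h1 : (insert x p).card = p.card + 1 := Finset.card_insert_of_notMem _hx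
  have h2 : (insert x p).card ≤ 9 := by
    simpa using Finset.card_le_univ (insert x p)
  omega

namespace Notakto

def center : Cell := (1, 1)

def mirror (c : Cell) : Cell := (c.1.rev, c.2.rev)

@[simp]
theorem mirror_mirror (c : Cell) : mirror (mirror c) = c := by
  simp [mirror]

theorem mirror_injective : Function.Injective mirror :=
  Function.LeftInverse.injective mirror_mirror

theorem mirror_ne_center {c : Cell} (hc : c ≠ center) : mirror c ≠ center := by
  revert c; decide

theorem mirror_ne_self {c : Cell} (hc : c ≠ center) : mirror c ≠ c := by
  revert c; decide

set_option maxRecDepth 10000 in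
theorem card_eq_three_of_mem_lines {l : Finset Cell} (hl : l ∈ notaktoLines) : l.card = 3 := by
  revert l; decide

theorem insert_center_mirror_mem_lines {x : Cell} (hx : x ≠ center) :
    {x, center, mirror x} ∈ notaktoLines := by
  revert x; decide

set_option maxRecDepth 10000 in
theorem image_mirror_mem_lines {l : Finset Cell} (hl : l ∈ notaktoLines) :
    l.image mirror ∈ notaktoLines := by
  revert l; decide

set_option maxRecDepth 10000 in
theorem center_mem_of_mem_of_mirror_mem {l : Finset Cell} (hl : l ∈ notaktoLines) {y : Cell}
    (hy : y ∈ l) (hmy : mirror y ∈ l) : center ∈ l := by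
  revert l y; decide

def MirrorClosed (p : Finset Cell) : Prop := ∀ c ∈ p, mirror c ∈ p

theorem MirrorClosed.insert_insert_mirror {p : Finset Cell} (hsym : MirrorClosed p) (y : Cell) :
    MirrorClosed (insert (mirror y) (insert y p)) := by
  intro c hc
  simp only [Finset.mem_insert] at hc ⊢
  rcases hc with rfl | rfl | hc
  · simp
  · simp
  · exact Or.inr (Or.inr (hsym c hc))

theorem not_dead_of_card_lt_three {p : Finset Cell} (hp : p.card < 3) : ¬ Dead p := by
  rintro ⟨l, hl, hlp⟩
  have := Finset.card_le_card hlp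
  rw [card_eq_three_of_mem_lines hl] at this
  omega

theorem dead_insert_center {p : Finset Cell} (hsym : MirrorClosed p) {x : Cell} (hx : x ∈ p)
    (hxc : x ≠ center) : Dead (insert center p) :=
  ⟨_, insert_center_mirror_mem_lines hxc, by simp [Finset.insert_subset_iff, hx, hsym x hx]⟩

theorem mirror_notMem_insert {p : Finset Cell} (hsym : MirrorClosed p) {y : Cell} (hyp : y ∉ p)
    (hy : y ≠ center) : mirror y ∉ insert y p := by
  rw [Finset.mem_insert, not_or]
  exact ⟨mirror_ne_self hy, fun h => hyp (mirror_mirror y ▸ hsym _ h)⟩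

theorem center_notMem_insert_mirror {p : Finset Cell} (hc : center ∉ p) {y : Cell}
    (hy : y ≠ center) : center ∉ insert (mirror y) (insert y p) := by
  simp only [Finset.mem_insert, not_or]
  exact ⟨(mirror_ne_center hy).symm, hy.symm, hc⟩

theorem not_dead_insert_mirror {p : Finset Cell} (hsym : MirrorClosed p) (hc : center ∉ p)
    {y : Cell} (hy : y ≠ center) (hdy : ¬ Dead (insert y p)) :
    ¬ Dead (insert (mirror y) (insert y p)) := by
  set q := insert (mirror y) (insert y p)
  rintro ⟨l, hl, hlq⟩
  have mirror_mem : ∀ l ∈ notaktoLines, l ⊆ q → mirror y ∈ l := fun l hl hlq => by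
    by_contra h
    exact hdy ⟨l, hl, (Finset.subset_insert_iff_of_notMem h).1 hlq⟩
  have hyl : y ∈ l := by
    have := mirror_mem _ (image_mirror_mem_lines hl)
      (Finset.image_subset_iff.2 fun z hz => hsym.insert_insert_mirror y z (hlq hz))
    rwa [mirror_injective.mem_finset_image] at this
  exact center_notMem_insert_mirror hc hy
    (hlq (center_mem_of_mem_of_mirror_mem hl hyl (mirror_mem l hl hlq)))

mutual

theorem firstWins_insert_of_mirrorClosed {p : Finset Cell} (hsym : MirrorClosed p)
    (hc : center ∉ p) {y : Cell} (hyp : y ∉ p) (hy : y ≠ center) (hdy : ¬ Dead (insert y p)) :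
    FirstWins (insert y p) := by
  have hmy := mirror_notMem_insert hsym hyp hy
  rw [FirstWins]
  exact ⟨mirror y, hmy, not_dead_insert_mirror hsym hc hy hdy,
    not_firstWins_of_mirrorClosed (hsym.insert_insert_mirror y) (center_notMem_insert_mirror hc hy)
      ⟨y, by simp⟩⟩
termination_by 8 - p.card
decreasing_by
  have h2 : (insert (mirror y) (insert y p)).card ≤ 9 := by
    simpa using Finset.card_le_univ (insert (mirror y) (insert y p))
  rw [Finset.card_insert_of_notMem hmy, Finset.card_insert_of_notMem hyp] at *
  omega

theorem not_firstWins_of_mirrorClosed {p : Finset Cell} (hsym : MirrorClosed p)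
    (hc : center ∉ p) (hp : p.Nonempty) : ¬ FirstWins p := by
  rw [FirstWins]
  rintro ⟨y, hyp, hdy, hwin⟩
  obtain ⟨x, hx⟩ := hp
  have hy : y ≠ center := by
    rintro rfl
    exact hdy (dead_insert_center hsym hx (ne_of_mem_of_not_mem hx hc))
  exact hwin (firstWins_insert_of_mirrorClosed hsym hc hyp hy hdy)
termination_by 9 - p.card
decreasing_by
  have h2 : (insert y p).card ≤ 9 := by simpa using Finset.card_le_univ (insert y p)
  rw [Finset.card_insert_of_notMem hyp] at h2
  omega

end

end Notakto

/-- Every non-center opening move loses: for every cell x ≠ (1,1), the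
single-mark position {x} is an N-position (not dead, and the player to
move — the second player of the game — has a winning strategy). -/
theorem noncenter_opening_N_position :
    ∀ x : Cell, x ≠ (1, 1) →
      ¬ Dead ({x} : Finset Cell) ∧ FirstWins ({x} : Finset Cell) := by
  intro x hx
  refine ⟨Notakto.not_dead_of_card_lt_three (by simp), ?_⟩
  rw [← Finset.insert_empty]
  exact Notakto.firstWins_insert_of_mirrorClosed (by simp [Notakto.MirrorClosed])
    (Finset.notMem_empty _) (Finset.notMem_empty _) hx
    (Notakto.not_dead_of_card_lt_three (by simp))
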